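/- Let (K, v) be a separably closed valued field of characteristic p > 0 with valuation ring O. Let a_0, …, a_d ∈ O with a_0 ≠ 0 and with at least one a_i a unit of O. Then for every n ∈ O there exists m ∈ O with ∑_{i=0}^{d} a_i·m^{p^i} = n; moreover, if v(n) = 0, then m can be chosen with v(m) = 0. -/

import Mathlib

/-!
The polynomial `f = ∑ aᵢ X^(pⁱ) - n` has derivative `a₀ ≠ 0`, so it is separable and splits
over `K`; let `m` be a root of maximal valuation. By Vieta, the coefficient of `X^(pⁱ)` is, up to
sign and the leading coefficient, a sum of products of all roots but `pⁱ` of them, so each term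
has valuation at least `v(∏ roots) - pⁱ·v(m)` (a Newton-polygon bound). Comparing the constant
coefficient `-n` with the unit coefficient `aᵢ` gives `0 ≤ v(n) ≤ pⁱ·v(m)`, hence `v(m) ≥ 0`.
If moreover `v(m) > 0`, every term of `∑ aᵢ m^(pⁱ)` has positive valuation, so `v(n) > 0`.
-/

/-- A valuation on a field `K` with values in the linearly ordered abelian group `Γ`
(together with `∞ = ⊤`), surjective onto `Γ`, i.e. `Γ = v(K^×)`. -/
structure ValuedFieldAux (K : Type*) [Field K] (Γ : Type*)
    [AddCommGroup Γ] [LinearOrder Γ] [IsOrderedAddMonoid Γ] where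
  v : K → WithTop Γ
  v_eq_top_iff : ∀ x : K, v x = ⊤ ↔ x = 0
  v_mul : ∀ x y : K, v (x * y) = v x + v y
  v_add : ∀ x y : K, min (v x) (v y) ≤ v (x + y)
  v_surj : ∀ γ : Γ, ∃ x : K, v x = (γ : WithTop Γ)

namespace ValuedFieldAux

variable {K : Type*} [Field K] {Γ : Type*} [AddCommGroup Γ] [LinearOrder Γ] [IsOrderedAddMonoid Γ]
  (vf : ValuedFieldAux K Γ)

lemma v_one : vf.v 1 = 0 := by
  have h := vf.v_mul 1 1
  rw [one_mul] at h
  lift vf.v 1 to Γ using (vf.v_eq_top_iff 1).not.2 one_ne_zero with γ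
  rw [← WithTop.coe_add, WithTop.coe_eq_coe, left_eq_add] at h
  rw [h, WithTop.coe_zero]

def toAddValuation : AddValuation K (WithTop Γ) :=
  AddValuation.of vf.v ((vf.v_eq_top_iff 0).2 rfl) vf.v_one vf.v_add vf.v_mul

end ValuedFieldAux

namespace AddValuation

open Polynomial

variable {R : Type*} [CommRing R] {Γ₀ : Type*} [LinearOrderedAddCommMonoidWithTop Γ₀]
  (v : AddValuation R Γ₀)

lemma map_multiset_prod (s : Multiset R) : v s.prod = (s.map v).sum := by
  induction s using Multiset.induction with
  | empty => simp
  | cons r s ih => rw [Multiset.prod_cons, map_mul, Multiset.map_cons, Multiset.sum_cons, ih]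

lemma map_multiset_prod_le_card_nsmul {s : Multiset R} {g : Γ₀} (hs : ∀ r ∈ s, v r ≤ g) :
    v s.prod ≤ Multiset.card s • g := by
  rw [map_multiset_prod, ← Multiset.card_map v]
  exact Multiset.sum_le_card_nsmul _ _ (by simpa using hs)

lemma le_map_multiset_sum_add {s : Multiset R} {g c : Γ₀} (hs : ∀ r ∈ s, g ≤ v r + c) :
    g ≤ v s.sum + c := by
  refine Multiset.sum_induction (fun x => g ≤ v x + c) s (fun x y hx hy => ?_) (by simp) hs
  calc g ≤ min (v x + c) (v y + c) := le_min hx hy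
    _ = min (v x) (v y) + c := min_add_add_right _ _ _
    _ ≤ v (x + y) + c := add_le_add_left (v.map_add x y) c

lemma map_prod_le_map_esymm_add_nsmul {s : Multiset R} {g : Γ₀} (hs : ∀ r ∈ s, v r ≤ g) (j : ℕ) :
    v s.prod ≤ v (s.esymm j) + (Multiset.card s - j) • g := by
  refine v.le_map_multiset_sum_add fun x hx => ?_
  obtain ⟨t, ht, rfl⟩ := Multiset.mem_map.1 hx
  obtain ⟨hts, rfl⟩ := Multiset.mem_powersetCard.1 ht
  obtain ⟨u, rfl⟩ := Multiset.le_iff_exists_add.1 hts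
  rw [Multiset.prod_add, map_mul, Multiset.card_add, add_tsub_cancel_left]
  exact add_le_add le_rfl (v.map_multiset_prod_le_card_nsmul fun r hr =>
    hs r (Multiset.mem_add.2 (Or.inr hr)))

lemma map_coeff_zero_le_map_coeff_add_nsmul [IsDomain R] {f : R[X]}
    (hroots : Multiset.card f.roots = f.natDegree) {g : Γ₀} (hg : ∀ r ∈ f.roots, v r ≤ g)
    (k : ℕ) : v (f.coeff 0) ≤ v (f.coeff k) + k • g := by
  rcases le_or_gt k f.natDegree with hk | hk
  · have hprod : f.roots.esymm f.natDegree = f.roots.prod := by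
      simp [Multiset.esymm, ← hroots, Multiset.powersetCard_self]
    rw [coeff_eq_esymm_roots_of_card hroots hk,
      coeff_eq_esymm_roots_of_card hroots f.natDegree.zero_le, Nat.sub_zero, hprod]
    simp only [map_mul, map_pow, map_neg, map_one, nsmul_zero, add_zero, add_assoc]
    have := v.map_prod_le_map_esymm_add_nsmul hg (f.natDegree - k)
    rw [hroots, Nat.sub_sub_self hk] at this
    exact add_le_add le_rfl this
  · simp [coeff_eq_zero_of_natDegree_lt hk]

end AddValuation

namespace Polynomial

section Semiring

variable {R : Type*} [CommSemiring R] (p d : ℕ) (a : ℕ → R)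

noncomputable def additivePoly : R[X] :=
  ∑ i ∈ Finset.range (d + 1), C (a i) * X ^ (p ^ i)

lemma eval_additivePoly (x : R) :
    (additivePoly p d a).eval x = ∑ i ∈ Finset.range (d + 1), a i * x ^ (p ^ i) := by
  simp [additivePoly, eval_finsetSum]

variable {p d}

lemma coeff_additivePoly_zero (hp : p ≠ 0) : (additivePoly p d a).coeff 0 = 0 := by
  simp only [additivePoly, finsetSum_coeff, coeff_C_mul, coeff_X_pow]
  exact Finset.sum_eq_zero fun i _ => by rw [if_neg (pow_ne_zero i hp).symm, mul_zero]

lemma coeff_additivePoly_pow (hp : 1 < p) {i : ℕ} (hi : i ≤ d) :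
    (additivePoly p d a).coeff (p ^ i) = a i := by
  simp [additivePoly, coeff_X_pow, Nat.pow_right_inj hp, Nat.lt_succ_of_le hi]

lemma derivative_additivePoly [CharP R p] : derivative (additivePoly p d a) = C (a 0) := by
  rw [additivePoly, derivative_sum, Finset.sum_eq_single 0]
  · simp
  · intro j _ hj
    rw [derivative_C_mul_X_pow, Nat.cast_pow, CharP.cast_eq_zero, zero_pow hj, mul_zero, C_0,
      zero_mul]
  · simp

end Semiring

lemma separable_additivePoly_sub_C {K : Type*} [Field K] {p : ℕ} [CharP K p] {d : ℕ}
    {a : ℕ → K} (ha0 : a 0 ≠ 0) (n : K) : (additivePoly p d a - C n).Separable := by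
  rw [separable_def, derivative_sub, derivative_C, sub_zero, derivative_additivePoly,
    ← mul_one (C (a 0))]
  exact (isCoprime_mul_unit_left_right (isUnit_C.2 ha0.isUnit) _ _).2 isCoprime_one_right

end Polynomial

namespace AddValuation

open Polynomial

variable {K : Type*} [Field K] {Γ₀ : Type*} [LinearOrderedAddCommMonoidWithTop Γ₀]
  (v : AddValuation K Γ₀) {p d : ℕ} {a : ℕ → K}

lemma map_eval_additivePoly_pos (hp : p ≠ 0) (ha : ∀ i ≤ d, 0 ≤ v (a i)) {m : K}
    (hm : 0 < v m) : 0 < v ((additivePoly p d a).eval m) := by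
  rw [eval_additivePoly]
  refine v.map_lt_sum' (hm.trans_le le_top) fun i hi => ?_
  rw [map_mul, map_pow]
  exact hm.trans_le (le_add_of_nonneg_of_le (ha i (Nat.lt_succ_iff.1 (Finset.mem_range.1 hi)))
    (le_self_nsmul hm.le (pow_ne_zero i hp)))

theorem exists_nonneg_eval_additivePoly_eq [IsSepClosed K] [CharP K p] (hp : p.Prime)
    (ha0 : a 0 ≠ 0) {i : ℕ} (hid : i ≤ d) (hai : v (a i) = 0) {n : K} (hn : 0 ≤ v n) :
    ∃ m, 0 ≤ v m ∧ (additivePoly p d a).eval m = n := by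
  classical
  set f := additivePoly p d a - C n
  have hcoeff : ∀ j ≤ d, f.coeff (p ^ j) = a j := fun j hj => by
    simp [f, coeff_additivePoly_pow a hp.one_lt hj, coeff_C, hp.ne_zero]
  have hcoeff_zero : f.coeff 0 = -n := by simp [f, coeff_additivePoly_zero a hp.ne_zero]
  have hcoeff_one : f.coeff 1 ≠ 0 := by simpa using (hcoeff 0 d.zero_le).trans_ne ha0
  have hf : f ≠ 0 := fun h => hcoeff_one (by rw [h, coeff_zero])
  have hroots : Multiset.card f.roots = f.natDegree := splits_iff_card_roots.1
    (IsSepClosed.splits_of_separable f (separable_additivePoly_sub_C ha0 n))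
  have hne : f.roots.toFinset.Nonempty := by
    rw [Multiset.toFinset_nonempty, ← Multiset.card_pos, hroots]
    exact le_natDegree_of_ne_zero hcoeff_one
  obtain ⟨m, hm, hmax⟩ := f.roots.toFinset.exists_max_image v hne
  refine ⟨m, ?_, ?_⟩
  · have key := v.map_coeff_zero_le_map_coeff_add_nsmul hroots
      (fun r hr => hmax r (Multiset.mem_toFinset.2 hr)) (p ^ i)
    rw [hcoeff_zero, hcoeff i hid, map_neg, hai, zero_add] at key
    exact (nsmul_nonneg_iff (pow_ne_zero i hp.ne_zero)).1 (hn.trans key)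
  · have hroot := (mem_roots hf).1 (Multiset.mem_toFinset.1 hm)
    simpa [f, sub_eq_zero] using hroot

end AddValuation

/-- Let `(K, v)` be a separably closed valued field of characteristic
`p > 0` with valuation ring `O`. Let `a_0, …, a_d ∈ O` with `a_0 ≠ 0` and at least one
`a_i` a unit. Then for every `n ∈ O` there is `m ∈ O` with `∑ a_i·m^{p^i} = n`;
moreover if `v n = 0` then `m` can be chosen with `v m = 0`. -/
theorem stmt_5 (p : ℕ) (hp : p.Prime) (K : Type*) [Field K] [CharP K p] [IsSepClosed K]
    (Γ : Type*) [AddCommGroup Γ] [LinearOrder Γ] [IsOrderedAddMonoid Γ] (vf : ValuedFieldAux K Γ)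
    (d : ℕ) (a : ℕ → K)
    (ha : ∀ i ≤ d, 0 ≤ vf.v (a i)) (ha0 : a 0 ≠ 0)
    (haunit : ∃ i ≤ d, vf.v (a i) = 0) :
    ∀ n : K, 0 ≤ vf.v n →
      (∃ m : K, 0 ≤ vf.v m ∧ ∑ i ∈ Finset.range (d + 1), a i * m ^ (p ^ i) = n) ∧
      (vf.v n = 0 →
        ∃ m : K, vf.v m = 0 ∧ ∑ i ∈ Finset.range (d + 1), a i * m ^ (p ^ i) = n) := by
  intro n hn
  obtain ⟨i, hid, hai⟩ := haunit
  obtain ⟨m, hm, hroot⟩ :=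
    vf.toAddValuation.exists_nonneg_eval_additivePoly_eq hp ha0 hid hai hn
  rw [Polynomial.eval_additivePoly] at hroot
  refine ⟨⟨m, hm, hroot⟩, fun hn0 => ⟨m, ?_, hroot⟩⟩
  by_contra hm0
  have := vf.toAddValuation.map_eval_additivePoly_pos hp.ne_zero ha (hm.lt_of_ne' hm0)
  rw [Polynomial.eval_additivePoly, hroot] at this
  exact this.ne' hn0
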